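/- Five-block structure for weighted number of tardy jobs: for every feasible instance of 1|er|Σw_jU_j (jobs in EDD order) there exist disjoint sets X*, Y*, Z* ⊆ J such that the sequence σ_{X*,Y*,Z*} (blocks X*, Y*, J^r \ Y*, Z*, remaining jobs, each in EDD order) is feasible and optimal, all jobs in X* ∪ Y* ∪ Z* are non-tardy in σ_{X*,Y*,Z*}, (X* ∪ Z*) ∩ J^r = ∅, and max(X* ∪ (Y* ∩ J^o)) < min Z*. -/

import Mathlib

/-
Take an optimal feasible schedule, and let `[a, b]` be the range of completion times of its
r-jobs. Its early jobs split into those completing before `a`, within `[a, b]` and after `b`;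
early o-jobs whose index exceeds that of an early job completing after `b` are moved to the last
group. In the five-block schedule built from these groups, every job of a group is preceded only by
jobs that completed, in the old schedule, no later than some early job of no larger index, so by
the EDD order it is still early. The r-jobs and the middle group all completed within the old
renting window, so the new window is no longer, and no job that was early has become tardy.
-/

variable {n : ℕ}

/-- completion time of job `j` in the schedule given by the list `l`:
total processing time of the prefix of `l` up to and including `j`. -/
def comp (p : Fin n → ℕ) (l : List (Fin n)) (j : Fin n) : ℕ :=
  ((l.takeWhile fun k => decide (k ≠ j)).map p).sum + p j

/-- the elements of a finset listed in increasing index order. -/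
def sortF (s : Finset (Fin n)) : List (Fin n) := s.sort (· ≤ ·)

/-- a schedule is a permutation of all of the jobs. -/
def IsSchedule (l : List (Fin n)) : Prop := l.Perm (List.finRange n)

/-- the renting period of schedule `l`: from the start of the first r-job to
the completion of the last r-job. -/
def rent (p : Fin n → ℕ) (Jr : Finset (Fin n)) (hJr : Jr.Nonempty)
    (l : List (Fin n)) : ℤ :=
  (Jr.sup' hJr fun j => (comp p l j : ℤ)) -
    (Jr.inf' hJr fun j => (comp p l j : ℤ) - p j)

/-- `H`: the o-jobs with index between `α = min J^r` and `β = max J^r`. -/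
def Hset (Jr : Finset (Fin n)) (hJr : Jr.Nonempty) : Finset (Fin n) :=
  (Finset.Icc (Jr.min' hJr) (Jr.max' hJr)) \ Jr

/-- the five-block sequence `σ_{X,Y}`: blocks `J[1,α-1]`, `X`,
`J[α,β] \ (X ∪ Y)`, `Y`, `J[β+1,n]`, each internally in increasing index
(WSPT resp. EDD) order. -/
def fiveBlock (Jr : Finset (Fin n)) (hJr : Jr.Nonempty)
    (X Y : Finset (Fin n)) : List (Fin n) :=
  sortF (Finset.Iio (Jr.min' hJr)) ++ sortF X ++
    sortF ((Finset.Icc (Jr.min' hJr) (Jr.max' hJr)) \ (X ∪ Y)) ++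
    sortF Y ++ sortF (Finset.Ioi (Jr.max' hJr))

/-- the five-block sequence `σ_{X,Y,Z}` for the weighted-number-of-tardy-jobs
problem: blocks `X`, `Y`, `J^r \ Y`, `Z`, remaining jobs, each internally in
EDD (increasing index) order. -/
def fiveBlockU (Jr X Y Z : Finset (Fin n)) : List (Fin n) :=
  sortF X ++ sortF Y ++ sortF (Jr \ Y) ++ sortF Z ++
    sortF (Finset.univ \ (X ∪ Y ∪ Jr ∪ Z))

/-- weighted number of tardy jobs of schedule `l`. -/
def WNT (p w d : Fin n → ℕ) (l : List (Fin n)) : ℕ :=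
  ∑ j : Fin n, w j * (if d j < comp p l j then 1 else 0)

open Finset

section Completion

variable (p : Fin n → ℕ)

theorem comp_cons_self (a : Fin n) (l : List (Fin n)) : comp p (a :: l) a = p a := by
  simp [comp]

theorem comp_cons_of_ne {a j : Fin n} (l : List (Fin n)) (h : j ≠ a) :
    comp p (a :: l) j = p a + comp p l j := by
  simp [comp, h.symm, Nat.add_assoc]

theorem le_comp (l : List (Fin n)) (j : Fin n) : p j ≤ comp p l j :=
  Nat.le_add_left _ _

theorem comp_append_of_not_mem {L : List (Fin n)} {j : Fin n} (l : List (Fin n)) (h : j ∉ L) :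
    comp p (L ++ l) j = (L.map p).sum + comp p l j := by
  induction L with
  | nil => simp
  | cons a L ih =>
    rw [List.mem_cons, not_or] at h
    rw [List.cons_append, comp_cons_of_ne p _ h.1, ih h.2, List.map_cons, List.sum_cons,
      Nat.add_assoc]

variable {p}

theorem comp_cons_self_lt (hp : ∀ j, 0 < p j) {a i : Fin n} {l : List (Fin n)} (ha : a ∉ l)
    (hi : i ∈ l) : comp p (a :: l) a < comp p (a :: l) i := by
  rw [comp_cons_self, comp_cons_of_ne p l (ne_of_mem_of_not_mem hi ha)]
  have := le_comp p l i
  have := hp i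
  omega

theorem comp_injOn (hp : ∀ j, 0 < p j) {l : List (Fin n)} (hl : l.Nodup) :
    Set.InjOn (comp p l) {i | i ∈ l} := by
  induction l with
  | nil => simp
  | cons a l ih =>
    obtain ⟨ha, hl⟩ := List.nodup_cons.1 hl
    intro i hi j hj hij
    rcases List.mem_cons.1 hi with rfl | hi' <;> rcases List.mem_cons.1 hj with rfl | hj'
    · rfl
    · exact absurd hij (comp_cons_self_lt hp ha hj').ne
    · exact absurd hij (comp_cons_self_lt hp ha hi').ne'
    · rw [comp_cons_of_ne p l (ne_of_mem_of_not_mem hi' ha),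
        comp_cons_of_ne p l (ne_of_mem_of_not_mem hj' ha)] at hij
      exact ih hl hi' hj' (Nat.add_left_cancel hij)

theorem comp_eq_sum_filter (hp : ∀ j, 0 < p j) {l : List (Fin n)} (hl : l.Nodup) {j : Fin n}
    (hj : j ∈ l) : comp p l j = ∑ i ∈ l.toFinset with comp p l i ≤ comp p l j, p i := by
  induction l with
  | nil => cases hj
  | cons a l ih =>
    obtain ⟨ha, hl⟩ := List.nodup_cons.1 hl
    have hcons : ∀ i ∈ l, comp p (a :: l) i = p a + comp p l i := fun i hi =>
      comp_cons_of_ne p l (ne_of_mem_of_not_mem hi ha)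
    rw [List.toFinset_cons, filter_insert]
    rcases List.mem_cons.1 hj with rfl | hj
    · rw [if_pos le_rfl, filter_false_of_mem fun i hi =>
        (comp_cons_self_lt hp ha (List.mem_toFinset.1 hi)).not_ge, comp_cons_self]
      simp
    · have hfilter : ({i ∈ l.toFinset | comp p (a :: l) i ≤ comp p (a :: l) j} : Finset _) =
          {i ∈ l.toFinset | comp p l i ≤ comp p l j} := filter_congr fun i hi => by
        rw [hcons i (List.mem_toFinset.1 hi), hcons j hj, Nat.add_le_add_iff_left]
      rw [if_pos (comp_cons_self_lt hp ha hj).le,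
        sum_insert fun h => ha (List.mem_toFinset.1 (mem_filter.1 h).1), hfilter, ← ih hl hj,
        hcons j hj]

end Completion

namespace IsSchedule

variable {p : Fin n → ℕ} {l : List (Fin n)}

theorem nodup (hl : IsSchedule l) : l.Nodup :=
  List.Perm.nodup_iff hl |>.2 (List.nodup_finRange n)

theorem mem (hl : IsSchedule l) (i : Fin n) : i ∈ l :=
  List.Perm.mem_iff hl |>.2 (List.mem_finRange i)

theorem comp_eq_sum (hp : ∀ j, 0 < p j) (hl : IsSchedule l) (j : Fin n) :
    comp p l j = ∑ i with comp p l i ≤ comp p l j, p i := by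
  have h := comp_eq_sum_filter hp hl.nodup (hl.mem j)
  rwa [eq_univ_of_forall fun i => List.mem_toFinset.2 (hl.mem i)] at h

theorem sum_le_comp (hp : ∀ j, 0 < p j) (hl : IsSchedule l) {T : Finset (Fin n)} {j : Fin n}
    (hT : ∀ i ∈ T, comp p l i ≤ comp p l j) : ∑ i ∈ T, p i ≤ comp p l j := by
  rw [hl.comp_eq_sum hp j]
  exact sum_le_sum_of_subset fun i hi => mem_filter.2 ⟨mem_univ i, hT i hi⟩

theorem sum_filter_lt_add (hp : ∀ j, 0 < p j) (hl : IsSchedule l) (j : Fin n) :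
    ∑ i with comp p l i < comp p l j, p i + p j = comp p l j := by
  have hsplit : univ.filter (fun i => comp p l i ≤ comp p l j) =
      insert j (univ.filter fun i => comp p l i < comp p l j) := by
    ext i
    simp only [mem_filter, mem_univ, true_and, mem_insert, le_iff_lt_or_eq,
      (comp_injOn hp hl.nodup).eq_iff (hl.mem i) (hl.mem j)]
    tauto
  rw [add_comm, ← sum_insert (by simp), ← hsplit, ← hl.comp_eq_sum hp j]

theorem sum_add_comp_le (hp : ∀ j, 0 < p j) (hl : IsSchedule l) {T : Finset (Fin n)}
    {u v : Fin n} (huv : comp p l u ≤ comp p l v)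
    (hT : ∀ i ∈ T, comp p l u ≤ comp p l i ∧ comp p l i ≤ comp p l v) :
    ∑ i ∈ T, p i + comp p l u ≤ comp p l v + p u := by
  have hdisj : Disjoint (univ.filter fun i => comp p l i < comp p l u) T :=
    disjoint_left.2 fun i hi hiT => ((mem_filter.1 hi).2).not_ge (hT i hiT).1
  have hbefore := hl.sum_le_comp hp (T := (univ.filter fun i => comp p l i < comp p l u) ∪ T)
    (j := v) <| by
    intro i hi
    rcases mem_union.1 hi with hi | hi
    · exact (mem_filter.1 hi).2.le.trans huv
    · exact (hT i hi).2
  rw [sum_union hdisj] at hbefore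
  have := hl.sum_filter_lt_add hp u
  omega

theorem sum_le_due {d : Fin n → ℕ} (hp : ∀ j, 0 < p j) (hd : Monotone d) (hl : IsSchedule l)
    {T : Finset (Fin n)} {j : Fin n}
    (hT : ∀ i ∈ T, ∃ m ≤ j, comp p l m ≤ d m ∧ comp p l i ≤ comp p l m) :
    ∑ i ∈ T, p i ≤ d j := by
  obtain rfl | ⟨i, hi⟩ := T.eq_empty_or_nonempty
  · simp
  obtain ⟨m, hmj, hm, -⟩ := hT i hi
  obtain ⟨k, hk, hkmax⟩ := exists_max_image {m | m ≤ j ∧ comp p l m ≤ d m} (comp p l)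
    ⟨m, by simp [hmj, hm]⟩
  simp only [mem_filter, mem_univ, true_and] at hk hkmax
  calc ∑ i ∈ T, p i ≤ comp p l k := hl.sum_le_comp hp fun i hi => by
        obtain ⟨m, hmj, hm, him⟩ := hT i hi
        exact him.trans (hkmax m ⟨hmj, hm⟩)
    _ ≤ d k := hk.2
    _ ≤ d j := hd hk.1

theorem sum_le_rent (hp : ∀ j, 0 < p j) (hl : IsSchedule l) {Jr : Finset (Fin n)}
    (hJr : Jr.Nonempty) {T : Finset (Fin n)}
    (hT : ∀ i ∈ T, Jr.inf' hJr (comp p l) ≤ comp p l i ∧ comp p l i ≤ Jr.sup' hJr (comp p l)) :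
    ((∑ i ∈ T, p i : ℕ) : ℤ) ≤ rent p Jr hJr l := by
  obtain ⟨u, hu, hu_eq⟩ := Jr.exists_mem_eq_inf' hJr (comp p l)
  obtain ⟨v, hv, hv_eq⟩ := Jr.exists_mem_eq_sup' hJr (comp p l)
  rw [hu_eq, hv_eq] at hT
  have hseg := hl.sum_add_comp_le hp (hu_eq ▸ Jr.inf'_le _ hv) hT
  have hv_le : (comp p l v : ℤ) ≤ Jr.sup' hJr fun j => (comp p l j : ℤ) :=
    le_sup' (fun j => (comp p l j : ℤ)) hv
  have hu_ge : Jr.inf' hJr (fun j => (comp p l j : ℤ) - p j) ≤ comp p l u - p u :=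
    inf'_le (fun j => (comp p l j : ℤ) - p j) hu
  unfold rent
  omega

end IsSchedule

theorem rent_le_of_forall {p : Fin n → ℕ} {Jr : Finset (Fin n)} (hJr : Jr.Nonempty)
    {l : List (Fin n)} {s D : ℕ} (h : ∀ r ∈ Jr, s + p r ≤ comp p l r ∧ comp p l r ≤ s + D) :
    rent p Jr hJr l ≤ D := by
  have hsup : Jr.sup' hJr (fun j => (comp p l j : ℤ)) ≤ s + D :=
    sup'_le _ _ fun r hr => by have := (h r hr).2; omega
  have hinf : (s : ℤ) ≤ Jr.inf' hJr (fun j => (comp p l j : ℤ) - p j) :=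
    le_inf' _ _ fun r hr => by have := (h r hr).1; omega
  unfold rent
  omega

theorem List.takeWhile_ne_append_concat_eq_filter {α : Type*} [LinearOrder α] {t : List α}
    (ht : t.Pairwise (· < ·)) {j : α} (hj : j ∈ t) (l : List α) :
    (t ++ l).takeWhile (fun k => decide (k ≠ j)) ++ [j] = t.filter (· ≤ j) := by
  induction t with
  | nil => cases hj
  | cons a t ih =>
    obtain ⟨ha, ht⟩ := List.pairwise_cons.1 ht
    rcases List.mem_cons.1 hj with rfl | hj
    · have : t.filter (· ≤ j) = [] := List.filter_eq_nil_iff.2 fun k hk => by simpa using ha k hk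
      simp [this]
    · have haj := ha j hj
      rw [List.cons_append, List.takeWhile_cons_of_pos (by simpa using haj.ne), List.cons_append,
        ih ht hj, List.filter_cons_of_pos (by simpa using haj.le)]

section Blocks

variable (p : Fin n → ℕ)

theorem sum_map_sortF (s : Finset (Fin n)) : ((sortF s).map p).sum = ∑ i ∈ s, p i := by
  rw [sortF, ← List.sum_toFinset _ (sort_nodup _ _), sort_toFinset]

theorem comp_sortF_append {s : Finset (Fin n)} {j : Fin n} (hj : j ∈ s) (l : List (Fin n)) :
    comp p (sortF s ++ l) j = ∑ i ∈ s with i ≤ j, p i := by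
  have hprefix : comp p (sortF s ++ l) j =
      (((sortF s ++ l).takeWhile (fun k => decide (k ≠ j)) ++ [j]).map p).sum := by
    simp [comp]
  rw [hprefix, sortF, List.takeWhile_ne_append_concat_eq_filter (sortedLT_sort s).pairwise
    ((mem_sort _).2 hj), ← List.sum_toFinset _ ((sort_nodup _ _).filter _), List.toFinset_filter,
    sort_toFinset]
  simp

end Blocks

section FiveBlock

variable {p : Fin n → ℕ} {Jr X Y Z : Finset (Fin n)} {j : Fin n}

theorem mem_sortF {s : Finset (Fin n)} : j ∈ sortF s ↔ j ∈ s := mem_sort _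

theorem sum_union_eq_add_sum_sdiff (s t : Finset (Fin n)) :
    ∑ i ∈ s ∪ t, p i = ∑ i ∈ s, p i + ∑ i ∈ t \ s, p i := by
  rw [← sum_union disjoint_sdiff, union_sdiff_self_eq_union]

theorem comp_fiveBlockU_of_mem_X (hj : j ∈ X) :
    comp p (fiveBlockU Jr X Y Z) j = ∑ i ∈ X with i ≤ j, p i := by
  simp only [fiveBlockU, List.append_assoc]
  exact comp_sortF_append p hj _

theorem comp_fiveBlockU_of_mem_Y (hXY : Disjoint X Y) (hj : j ∈ Y) :
    comp p (fiveBlockU Jr X Y Z) j = ∑ i ∈ X, p i + ∑ i ∈ Y with i ≤ j, p i := by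
  simp only [fiveBlockU, List.append_assoc]
  rw [comp_append_of_not_mem p _ (mem_sortF.not.2 (disjoint_right.1 hXY hj)),
    comp_sortF_append p hj, sum_map_sortF]

theorem comp_fiveBlockU_of_mem_sdiff (hXJ : Disjoint X Jr) (hj : j ∈ Jr \ Y) :
    comp p (fiveBlockU Jr X Y Z) j =
      ∑ i ∈ X, p i + ∑ i ∈ Y, p i + ∑ i ∈ Jr \ Y with i ≤ j, p i := by
  obtain ⟨hjJ, hjY⟩ := mem_sdiff.1 hj
  simp only [fiveBlockU, List.append_assoc]
  rw [comp_append_of_not_mem p _ (mem_sortF.not.2 (disjoint_right.1 hXJ hjJ)),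
    comp_append_of_not_mem p _ (mem_sortF.not.2 hjY), comp_sortF_append p hj, sum_map_sortF,
    sum_map_sortF, Nat.add_assoc]

theorem comp_fiveBlockU_of_mem_Z (hXZ : Disjoint X Z) (hYZ : Disjoint Y Z) (hZJ : Disjoint Z Jr)
    (hj : j ∈ Z) :
    comp p (fiveBlockU Jr X Y Z) j =
      ∑ i ∈ X, p i + ∑ i ∈ Y ∪ Jr, p i + ∑ i ∈ Z with i ≤ j, p i := by
  have hjJY : j ∉ sortF (Jr \ Y) :=
    mem_sortF.not.2 fun h => disjoint_left.1 hZJ hj (mem_sdiff.1 h).1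
  simp only [fiveBlockU, List.append_assoc]
  rw [comp_append_of_not_mem p _ (mem_sortF.not.2 (disjoint_right.1 hXZ hj)),
    comp_append_of_not_mem p _ (mem_sortF.not.2 (disjoint_right.1 hYZ hj)),
    comp_append_of_not_mem p _ hjJY, comp_sortF_append p hj, sum_map_sortF, sum_map_sortF,
    sum_map_sortF, sum_union_eq_add_sum_sdiff]
  ring

theorem single_le_sum_filter_le (s : Finset (Fin n)) (hj : j ∈ s) : p j ≤ ∑ i ∈ s with i ≤ j, p i :=
  single_le_sum (fun _ _ => Nat.zero_le _) (mem_filter.2 ⟨hj, le_rfl⟩)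

theorem sum_filter_le_le_sum (s : Finset (Fin n)) : ∑ i ∈ s with i ≤ j, p i ≤ ∑ i ∈ s, p i :=
  sum_le_sum_of_subset (filter_subset _ _)

theorem rent_fiveBlockU_le (hJr : Jr.Nonempty) (hXY : Disjoint X Y) (hXJ : Disjoint X Jr) :
    rent p Jr hJr (fiveBlockU Jr X Y Z) ≤ ((∑ i ∈ Y ∪ Jr, p i : ℕ) : ℤ) := by
  rw [sum_union_eq_add_sum_sdiff]
  refine rent_le_of_forall hJr (s := ∑ i ∈ X, p i) fun r hr => ?_
  by_cases hrY : r ∈ Y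
  · rw [comp_fiveBlockU_of_mem_Y hXY hrY]
    have := single_le_sum_filter_le (p := p) Y hrY
    have := sum_filter_le_le_sum (p := p) (j := r) Y
    omega
  · have hr' : r ∈ Jr \ Y := mem_sdiff.2 ⟨hr, hrY⟩
    rw [comp_fiveBlockU_of_mem_sdiff hXJ hr']
    have := single_le_sum_filter_le (p := p) _ hr'
    have := sum_filter_le_le_sum (p := p) (j := r) (Jr \ Y)
    omega

theorem comp_fiveBlockU_le_due {d : Fin n → ℕ} {l : List (Fin n)} (hp : ∀ j, 0 < p j)
    (hd : Monotone d) (hl : IsSchedule l) (hXY : Disjoint X Y) (hXZ : Disjoint X Z)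
    (hYZ : Disjoint Y Z) (hXZJ : Disjoint (X ∪ Z) Jr)
    (hearly : ∀ i ∈ X ∪ Y ∪ Z, comp p l i ≤ d i)
    (hXY_comp : ∀ x ∈ X, ∀ y ∈ Y, comp p l x ≤ comp p l y)
    (hZ : ∀ z ∈ Z, ∃ m ≤ z, comp p l m ≤ d m ∧ ∀ i ∈ X ∪ (Y ∪ Jr), comp p l i ≤ comp p l m) :
    ∀ j ∈ X ∪ Y ∪ Z, comp p (fiveBlockU Jr X Y Z) j ≤ d j := by
  have hself : ∀ s ⊆ X ∪ Y ∪ Z, ∀ j, ∀ i ∈ s.filter (· ≤ j),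
      ∃ m ≤ j, comp p l m ≤ d m ∧ comp p l i ≤ comp p l m := fun s hs j i hi =>
    ⟨i, (mem_filter.1 hi).2, hearly i (hs (mem_filter.1 hi).1), le_rfl⟩
  intro j hj
  rcases mem_union.1 hj with hj | hjZ
  rcases mem_union.1 hj with hjX | hjY
  · rw [comp_fiveBlockU_of_mem_X hjX]
    exact hl.sum_le_due hp hd (hself X (subset_union_left.trans subset_union_left) j)
  · rw [comp_fiveBlockU_of_mem_Y hXY hjY, ← sum_union (hXY.mono_right (filter_subset _ _))]
    refine hl.sum_le_due hp hd fun i hi => ?_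
    rcases mem_union.1 hi with hi | hi
    · exact ⟨j, le_rfl, hearly j (by simp [hjY]), hXY_comp i hi j hjY⟩
    · exact hself Y (subset_union_right.trans subset_union_left) j i hi
  · obtain ⟨m, hmj, hm, hdom⟩ := hZ j hjZ
    have hZJ : Disjoint Z Jr := disjoint_union_left.1 hXZJ |>.2
    rw [comp_fiveBlockU_of_mem_Z hXZ hYZ hZJ hjZ,
      ← sum_union (disjoint_union_right.2 ⟨hXY, (disjoint_union_left.1 hXZJ).1⟩),
      ← sum_union (disjoint_union_left.2 ⟨hXZ, disjoint_union_left.2 ⟨hYZ, hZJ.symm⟩⟩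
        |>.mono_right (filter_subset _ _))]
    refine hl.sum_le_due hp hd fun i hi => ?_
    rcases mem_union.1 hi with hi | hi
    · exact ⟨m, hmj, hm, hdom i hi⟩
    · exact hself Z subset_union_right j i hi

end FiveBlock

section Partition

variable {α β : Type*} [LinearOrder α] [LinearOrder β] (c : α → β) (E Jr : Finset α) (a b : β)

-- With `c` the completion times of a schedule, `E` its early jobs and `[a, b]` the range of
-- completion times of its r-jobs, these are the blocks `Z*`, `X*` and `Y*`.
def blockZ : Finset α := {j ∈ E \ Jr | ∃ z ∈ E, b < c z ∧ z ≤ j}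

def blockX : Finset α := {j ∈ E | c j < a} \ blockZ c E Jr b

def blockY : Finset α := {j ∈ E | a ≤ c j ∧ c j ≤ b} \ blockZ c E Jr b

variable {c E Jr a b}

theorem blockX_subset : blockX c E Jr a b ⊆ E := fun _ h => (mem_filter.1 (mem_sdiff.1 h).1).1

theorem blockY_subset : blockY c E Jr a b ⊆ E := fun _ h => (mem_filter.1 (mem_sdiff.1 h).1).1

theorem blockZ_subset : blockZ c E Jr b ⊆ E := fun _ h => (mem_sdiff.1 (mem_filter.1 h).1).1

theorem disjoint_blockX_blockY : Disjoint (blockX c E Jr a b) (blockY c E Jr a b) :=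
  disjoint_left.2 fun _ hX hY =>
    (mem_filter.1 (mem_sdiff.1 hX).1).2.not_ge (mem_filter.1 (mem_sdiff.1 hY).1).2.1

theorem disjoint_blockX_blockZ : Disjoint (blockX c E Jr a b) (blockZ c E Jr b) :=
  sdiff_disjoint

theorem disjoint_blockY_blockZ : Disjoint (blockY c E Jr a b) (blockZ c E Jr b) :=
  sdiff_disjoint

theorem disjoint_blockX_union_blockZ (ha : ∀ r ∈ Jr, a ≤ c r) :
    Disjoint (blockX c E Jr a b ∪ blockZ c E Jr b) Jr := by
  refine disjoint_union_left.2
    ⟨disjoint_left.2 fun r hX hr => ?_, disjoint_left.2 fun r hZ hr => ?_⟩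
  · exact (mem_filter.1 (mem_sdiff.1 hX).1).2.not_ge (ha r hr)
  · exact (mem_sdiff.1 (mem_filter.1 hZ).1).2 hr

theorem lt_of_mem_blockZ (ha : ∀ r ∈ Jr, a ≤ c r) {x z : α}
    (hx : x ∈ blockX c E Jr a b ∪ (blockY c E Jr a b \ Jr)) (hz : z ∈ blockZ c E Jr b) : x < z := by
  have hxE : x ∈ E \ Jr ∧ x ∉ blockZ c E Jr b := by
    rcases mem_union.1 hx with hx | hx
    · exact ⟨mem_sdiff.2 ⟨blockX_subset hx, fun hr =>
        disjoint_left.1 (disjoint_blockX_union_blockZ ha) (mem_union_left _ hx) hr⟩,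
        disjoint_left.1 disjoint_blockX_blockZ hx⟩
    · obtain ⟨hxY, hxJ⟩ := mem_sdiff.1 hx
      exact ⟨mem_sdiff.2 ⟨blockY_subset hxY, hxJ⟩, disjoint_left.1 disjoint_blockY_blockZ hxY⟩
  obtain ⟨w, hwE, hbw, hwz⟩ := (mem_filter.1 hz).2
  refine lt_of_lt_of_le (not_le.1 fun hwx => hxE.2 ?_) hwz
  exact mem_filter.2 ⟨hxE.1, w, hwE, hbw, hwx⟩

theorem subset_blockX_union (hb : ∀ r ∈ Jr, c r ≤ b) :
    E ⊆ blockX c E Jr a b ∪ blockY c E Jr a b ∪ blockZ c E Jr b := by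
  intro j hj
  by_cases hjZ : j ∈ blockZ c E Jr b
  · exact mem_union_right _ hjZ
  rcases lt_or_ge (c j) a with hja | hja
  · exact mem_union_left _ (mem_union_left _ (mem_sdiff.2 ⟨mem_filter.2 ⟨hj, hja⟩, hjZ⟩))
  rcases le_or_gt (c j) b with hjb | hjb
  · exact mem_union_left _ (mem_union_right _ (mem_sdiff.2 ⟨mem_filter.2 ⟨hj, hja, hjb⟩, hjZ⟩))
  · exact absurd (mem_filter.2 ⟨mem_sdiff.2 ⟨hj, fun hr => (hb j hr).not_gt hjb⟩,
      j, hj, hjb, le_rfl⟩) hjZ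

theorem lt_of_mem_blockX_of_mem_blockY {x y : α} (hx : x ∈ blockX c E Jr a b)
    (hy : y ∈ blockY c E Jr a b) : c x < c y :=
  (mem_filter.1 (mem_sdiff.1 hx).1).2.trans_le (mem_filter.1 (mem_sdiff.1 hy).1).2.1

theorem le_of_mem_blockY {y : α} (hy : y ∈ blockY c E Jr a b) : a ≤ c y ∧ c y ≤ b :=
  (mem_filter.1 (mem_sdiff.1 hy).1).2

theorem exists_lt_of_mem_blockZ (hab : a ≤ b) (hb : ∀ r ∈ Jr, c r ≤ b) {z : α}
    (hz : z ∈ blockZ c E Jr b) :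
    ∃ w ≤ z, w ∈ E ∧ ∀ i ∈ blockX c E Jr a b ∪ (blockY c E Jr a b ∪ Jr), c i < c w := by
  obtain ⟨w, hwE, hbw, hwz⟩ := (mem_filter.1 hz).2
  refine ⟨w, hwz, hwE, fun i hi => lt_of_le_of_lt ?_ hbw⟩
  rw [mem_union, mem_union] at hi
  rcases hi with hi | hi | hi
  · exact ((mem_filter.1 (mem_sdiff.1 hi).1).2.trans_le hab).le
  · exact (le_of_mem_blockY hi).2
  · exact hb i hi

end Partition

theorem WNT_le_WNT {p w d : Fin n → ℕ} {l l' : List (Fin n)}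
    (h : ∀ j, comp p l j ≤ d j → comp p l' j ≤ d j) : WNT p w d l' ≤ WNT p w d l := by
  refine sum_le_sum fun j _ => Nat.mul_le_mul_left _ ?_
  have := h j
  split_ifs <;> omega

theorem exists_fiveBlockU_le {p w d : Fin n → ℕ} (hp : ∀ j, 0 < p j) (hd : Monotone d)
    {Jr : Finset (Fin n)} (hJr : Jr.Nonempty) {l : List (Fin n)} (hl : IsSchedule l) :
    ∃ X Y Z : Finset (Fin n),
      Disjoint X Y ∧ Disjoint X Z ∧ Disjoint Y Z ∧ Disjoint (X ∪ Z) Jr ∧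
      (∀ x ∈ X ∪ (Y \ Jr), ∀ z ∈ Z, x < z) ∧
      rent p Jr hJr (fiveBlockU Jr X Y Z) ≤ rent p Jr hJr l ∧
      (∀ j ∈ X ∪ Y ∪ Z, comp p (fiveBlockU Jr X Y Z) j ≤ d j) ∧
      WNT p w d (fiveBlockU Jr X Y Z) ≤ WNT p w d l := by
  set E : Finset (Fin n) := {j | comp p l j ≤ d j}
  set a := Jr.inf' hJr (comp p l)
  set b := Jr.sup' hJr (comp p l)
  have ha : ∀ r ∈ Jr, a ≤ comp p l r := fun r hr => inf'_le _ hr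
  have hb : ∀ r ∈ Jr, comp p l r ≤ b := fun r hr => le_sup' _ hr
  have hab : a ≤ b := hJr.elim fun r hr => (ha r hr).trans (hb r hr)
  have hE : ∀ i ∈ E, comp p l i ≤ d i := fun i hi => (mem_filter.1 hi).2
  have hXZJ := disjoint_blockX_union_blockZ (E := E) (b := b) ha
  have hearly := comp_fiveBlockU_le_due hp hd hl disjoint_blockX_blockY disjoint_blockX_blockZ
    disjoint_blockY_blockZ hXZJ
    (fun i hi => hE i (union_subset (union_subset blockX_subset blockY_subset) blockZ_subset hi))
    (fun x hx y hy => (lt_of_mem_blockX_of_mem_blockY hx hy).le)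
    fun z hz => by
      obtain ⟨w, hwz, hwE, hlt⟩ := exists_lt_of_mem_blockZ hab hb hz
      exact ⟨w, hwz, hE w hwE, fun i hi => (hlt i hi).le⟩
  refine ⟨_, _, _, disjoint_blockX_blockY, disjoint_blockX_blockZ, disjoint_blockY_blockZ, hXZJ,
    fun x hx z hz => lt_of_mem_blockZ ha hx hz, ?_, hearly,
    WNT_le_WNT fun j hj => hearly j (subset_blockX_union hb (mem_filter.2 ⟨mem_univ j, hj⟩))⟩
  refine (rent_fiveBlockU_le hJr disjoint_blockX_blockY (disjoint_union_left.1 hXZJ).1).trans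
    (hl.sum_le_rent hp hJr fun i hi => ?_)
  rcases mem_union.1 hi with hi | hi
  · exact le_of_mem_blockY hi
  · exact ⟨ha i hi, hb i hi⟩

/-- five-block structure for `1|er|Σ w_j U_j` (jobs in EDD order):
for every instance admitting a feasible sequence there are disjoint
`X*, Y*, Z*` such that `σ_{X*,Y*,Z*}` is feasible and optimal, all jobs of
`X* ∪ Y* ∪ Z*` are non-tardy in it, `(X* ∪ Z*) ∩ J^r = ∅`, and
`max (X* ∪ (Y* ∩ J^o)) < min Z*`. -/
theorem stmt14 {n : ℕ} (p w d : Fin n → ℕ) (hp : ∀ j, 0 < p j)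
    (hd : Monotone d)
    (Jr : Finset (Fin n)) (hJr : Jr.Nonempty) (Kr : ℤ)
    (hfeas : ∃ l : List (Fin n), IsSchedule l ∧ rent p Jr hJr l ≤ Kr) :
    ∃ X Y Z : Finset (Fin n),
      Disjoint X Y ∧ Disjoint X Z ∧ Disjoint Y Z ∧
      Disjoint (X ∪ Z) Jr ∧
      (∀ x ∈ X ∪ (Y \ Jr), ∀ z ∈ Z, x < z) ∧
      rent p Jr hJr (fiveBlockU Jr X Y Z) ≤ Kr ∧
      (∀ j ∈ X ∪ Y ∪ Z, comp p (fiveBlockU Jr X Y Z) j ≤ d j) ∧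
      ∀ l : List (Fin n), IsSchedule l → rent p Jr hJr l ≤ Kr →
        WNT p w d (fiveBlockU Jr X Y Z) ≤ WNT p w d l := by
  obtain ⟨l, ⟨hl, hlK⟩, hmin⟩ := exists_minimalFor_of_wellFoundedLT
    (fun l => IsSchedule l ∧ rent p Jr hJr l ≤ Kr) (WNT p w d) hfeas
  obtain ⟨X, Y, Z, hXY, hXZ, hYZ, hXZJ, horder, hrent, hearly, hWNT⟩ :=
    exists_fiveBlockU_le (w := w) hp hd hJr hl
  refine ⟨X, Y, Z, hXY, hXZ, hYZ, hXZJ, horder, hrent.trans hlK, hearly, fun l' hl' hl'K => ?_⟩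
  exact hWNT.trans ((le_total _ _).elim id (hmin ⟨hl', hl'K⟩))
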